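/- In a matroid N, let P be a rank-1 flat, H a rank-(k-2) flat, x, y elements such that H ∪ P ∪ {x,y}, H ∪ {x,y}, and P ∪ {x,y} are flats of ranks k+1, k, and 3 respectively, with z ∈ P such that {x,z} is a two-point line, and let F' be a rank-(k-1) flat contained in H ∪ {x,y} containing x but not y. Then F' ∪ {z} is a flat of rank k, and hence an ordinary rank-k flat (the direct sum of F' and the point {z}). -/

import Mathlib

open Set Matroid

namespace SG

variable {α : Type*}

/-- The rank of a set in a matroid: the supremum of sizes of independent subsets. -/
noncomputable def rk (M : Matroid α) (X : Set α) : ℕ :=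
  sSup (Set.ncard '' {I | M.Indep I ∧ I ⊆ X})

/-- The rank of a matroid. -/
noncomputable def rank (M : Matroid α) : ℕ := rk M M.E

/-- `F` is a rank-`k` flat of `M`. -/
def IsRkFlat (M : Matroid α) (k : ℕ) (F : Set α) : Prop := M.IsFlat F ∧ rk M F = k

/-- A matroid is loopless if every element has rank one. -/
def Loopless (M : Matroid α) : Prop := ∀ e ∈ M.E, rk M {e} = 1

/-- A matroid is simple if it has no loops and no parallel pairs. -/
def Simple (M : Matroid α) : Prop :=
  Loopless M ∧ ∀ e ∈ M.E, ∀ f ∈ M.E, rk M {e, f} ≤ 1 → e = f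

/-- `M` is representable over the field `𝔽`. -/
def Representable (𝔽 : Type) [Field 𝔽] (M : Matroid α) : Prop :=
  ∃ φ : α → (α →₀ 𝔽), ∀ I ⊆ M.E,
    (M.Indep I ↔ LinearIndependent 𝔽 (fun x : I => φ x.1))

/-- The contraction `M/C`, defined by duality: `M/C = (M✶ ＼ C)✶`. -/
noncomputable def contract (M : Matroid α) (C : Set α) : Matroid α :=
  (M✶ ↾ (M.E \ C))✶

/-- `F` is an ordinary rank-`k` flat: the direct sum of a point and a rank-`(k-1)` flat. -/
def OrdinaryFlat (M : Matroid α) (k : ℕ) (F : Set α) : Prop :=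
  IsRkFlat M k F ∧ ∃ P F₁, IsRkFlat M 1 P ∧ IsRkFlat M (k-1) F₁ ∧
    F = P ∪ F₁ ∧ rk M F = rk M P + rk M F₁

/-- `F` is an elementary rank-`k` flat: a rank-`k` flat with exactly `k` elements. -/
def ElementaryFlat (M : Matroid α) (k : ℕ) (F : Set α) : Prop :=
  IsRkFlat M k F ∧ F.ncard = k

/-- A three-point line: a simple rank-2 matroid on three elements (i.e. `U_{2,3}`). -/
def IsThreePointLine (M : Matroid α) : Prop :=
  M.E.ncard = 3 ∧ Simple M ∧ rank M = 2

/-- The ternary affine plane AG(2,3): a simple rank-3 matroid on nine points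
in which every line has exactly three points. -/
def IsAG23 (M : Matroid α) : Prop :=
  M.E.ncard = 9 ∧ Simple M ∧ rank M = 3 ∧ ∀ L, IsRkFlat M 2 L → L.ncard = 3

/-!
The point `P` is the closure of `z`, so it lies in the two-point line `{x, z}` and misses `x`;
hence `P = {z}`, and the flat `H ∪ P ∪ {x, y}` is `B + z` for the flat `B = H ∪ {x, y}`, with
`z ∉ B` because the two ranks differ. For a flat `F' ⊆ B`, the exchange property gives
`cl(F' + z) ∩ B = F'`, and `cl(F' + z) ⊆ B + z`; hence `F' + z` is itself a flat, of rank
`r(F') + 1 = k`.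
-/

variable {M : Matroid α} {X P F B : Set α} {e x z : α} {n : ℕ}

lemma rk_eq_toNat_eRk (M : Matroid α) (X : Set α) : rk M X = (M.eRk X).toNat := by
  obtain ⟨I, hI⟩ := M.exists_isBasis' X
  rw [hI.eRk_eq_encard, ← ncard_def, rk]
  by_cases hfin : I.Finite
  · refine IsGreatest.csSup_eq ⟨⟨I, ⟨hI.indep, hI.subset⟩, rfl⟩, ?_⟩
    rintro _ ⟨J, ⟨hJ, hJX⟩, rfl⟩
    have hJI : J.encard ≤ I.encard := hI.eRk_eq_encard ▸ hJ.encard_le_eRk_of_subset hJX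
    exact ENat.toNat_le_toNat hJI hfin.encard_lt_top.ne
  · rw [Infinite.ncard hfin]
    refine Nat.sSup_of_not_bddAbove fun ⟨n, hn⟩ ↦ ?_
    obtain ⟨J, hJI, hJ⟩ := Infinite.exists_subset_ncard_eq hfin (n + 1)
    have : n + 1 ≤ n := hn ⟨J, ⟨hI.indep.subset hJI, hJI.trans hI.subset⟩, hJ.2⟩
    omega

lemma isRkFinite_of_rk_ne_zero (h : rk M X ≠ 0) : M.IsRkFinite X :=
  eRk_ne_top_iff.1 fun hX ↦ h (by rw [rk_eq_toNat_eRk, hX, ENat.toNat_top])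

lemma eRk_eq_of_rk_eq (h : rk M X = n) (hX : M.IsRkFinite X) : M.eRk X = n := by
  rw [← h, rk_eq_toNat_eRk, ENat.natCast_toNat hX.eRk_lt_top.ne]

lemma rk_insert_eq_add_one (hX : M.IsRkFinite X) (he : e ∈ M.E \ M.closure X) :
    rk M (insert e X) = rk M X + 1 := by
  rw [rk_eq_toNat_eRk, rk_eq_toNat_eRk, eRk_insert_eq_add_one he,
    ENat.toNat_add hX.eRk_lt_top.ne ENat.one_ne_top, ENat.toNat_one]

lemma _root_.Matroid.isNonloop_of_eRk_pair_eq_two (h : M.eRk {x, z} = 2) : M.IsNonloop z := by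
  rw [← eRk_singleton_eq_one_iff]
  have hle := M.eRk_insert_le_add_one x {z}
  rw [h] at hle
  refine le_antisymm (M.eRk_singleton_le z) ?_
  exact (ENat.add_le_add_iff_right ENat.one_ne_top).1 (by simpa [one_add_one_eq_two] using hle)

lemma IsRkFlat.eRk_eq_one (hP : IsRkFlat M 1 P) : M.eRk P = 1 :=
  eRk_eq_of_rk_eq hP.2 (isRkFinite_of_rk_ne_zero (by rw [hP.2]; omega))

lemma IsRkFlat.closure_singleton_eq (hP : IsRkFlat M 1 P) (hzP : z ∈ P) (hz : M.IsNonloop z) :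
    M.closure {z} = P := by
  rw [← hP.1.closure]
  refine M.isRkFinite_singleton.closure_eq_closure_of_subset_of_eRk_ge_eRk
    (singleton_subset_iff.2 hzP) ?_
  rw [hz.eRk_eq, hP.eRk_eq_one]

lemma IsRkFlat.eq_singleton_of_closure_pair (hP : IsRkFlat M 1 P) (hzP : z ∈ P)
    (hxz : M.eRk {x, z} = 2) (hcl : M.closure {x, z} = {x, z}) : P = {z} := by
  have hPxz : P ⊆ {x, z} := by
    rw [← hP.closure_singleton_eq hzP (isNonloop_of_eRk_pair_eq_two hxz), ← hcl]
    exact M.closure_subset_closure (by simp)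
  have hxP : x ∉ P := fun hxP ↦ by
    have hle := M.eRk_mono (insert_subset hxP (singleton_subset_iff.2 hzP))
    rw [hxz, hP.eRk_eq_one] at hle
    norm_num at hle
  refine subset_antisymm (fun w hw ↦ ?_) (singleton_subset_iff.2 hzP)
  rcases hPxz hw with rfl | rfl
  · exact absurd hw hxP
  · rfl

lemma _root_.Matroid.IsFlat.closure_insert_inter_eq (hF : M.IsFlat F) (hB : M.IsFlat B)
    (hFB : F ⊆ B) (hzB : z ∉ B) : M.closure (insert z F) ∩ B = F := by
  refine subset_antisymm ?_ (subset_inter ((M.subset_closure F hF.subset_ground).trans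
    (M.closure_subset_closure (subset_insert z F))) hFB)
  rintro w ⟨hwz, hwB⟩
  by_contra hwF
  have hzw := M.closure_exchange ⟨hwz, by rwa [hF.closure]⟩
  exact hzB (hB.closure ▸ M.closure_subset_closure (insert_subset hwB hFB) hzw.1)

lemma _root_.Matroid.IsFlat.isFlat_insert_of_subset (hB : M.IsFlat B)
    (hBz : M.IsFlat (insert z B)) (hF : M.IsFlat F) (hFB : F ⊆ B) (hzB : z ∉ B) :
    M.IsFlat (insert z F) := by
  have hzE : z ∈ M.E := hBz.subset_ground (mem_insert z B)
  rw [isFlat_iff_closure_eq]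
  refine subset_antisymm (fun w hw ↦ ?_) (M.subset_closure _ (insert_subset hzE hF.subset_ground))
  have hwBz : w ∈ insert z B :=
    hBz.closure ▸ M.closure_subset_closure (insert_subset_insert hFB) hw
  rcases hwBz with rfl | hwB
  · exact mem_insert w F
  · exact mem_insert_of_mem z (hF.closure_insert_inter_eq hB hFB hzB ▸ ⟨hw, hwB⟩)

theorem ordinary_flat_construction_general {α : Type*} (N : Matroid α) (k : ℕ) (P H F' : Set α)
    (x y z : α) (hP : IsRkFlat N 1 P)
    (h1 : IsRkFlat N (k + 1) (H ∪ P ∪ {x, y}))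
    (h2 : IsRkFlat N k (H ∪ {x, y}))
    (hzP : z ∈ P) (hxz : IsRkFlat N 2 {x, z}) (hxzcl : N.closure {x, z} = {x, z})
    (hF' : IsRkFlat N (k - 1) F') (hF'sub : F' ⊆ H ∪ {x, y}) :
    IsRkFlat N k (F' ∪ {z}) ∧ OrdinaryFlat N k (F' ∪ {z}) := by
  have hxz2 : N.eRk {x, z} = 2 := eRk_eq_of_rk_eq hxz.2 (N.isRkFinite_of_finite (Set.toFinite _))
  have hPz : P = {z} := hP.eq_singleton_of_closure_pair hzP hxz2 hxzcl
  have hS : H ∪ P ∪ {x, y} = insert z (H ∪ {x, y}) := by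
    rw [hPz]; ext; simp only [mem_union, mem_insert_iff, mem_singleton_iff]; tauto
  have hSfin : N.IsRkFinite (H ∪ P ∪ {x, y}) := isRkFinite_of_rk_ne_zero (by rw [h1.2]; omega)
  have hzB : z ∉ H ∪ {x, y} := fun hz ↦ by
    have hrkS := h1.2
    rw [hS, insert_eq_of_mem hz, h2.2] at hrkS
    omega
  have hk : 1 ≤ k := by
    have hle := N.eRk_mono (show {x, z} ⊆ H ∪ P ∪ {x, y} by rw [hS]; simp [insert_subset_iff])
    rw [hxz2, eRk_eq_of_rk_eq h1.2 hSfin] at hle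
    have : 2 ≤ k + 1 := by exact_mod_cast hle
    omega
  have hflat : N.IsFlat (insert z F') := h2.1.isFlat_insert_of_subset (hS ▸ h1.1) hF'.1 hF'sub hzB
  have hrk : rk N (insert z F') = k := by
    rw [rk_insert_eq_add_one (hSfin.subset (hF'sub.trans (hS ▸ subset_insert z _))), hF'.2]
    · omega
    · rw [hF'.1.closure]
      exact ⟨hflat.subset_ground (mem_insert z F'), fun hzF' ↦ hzB (hF'sub hzF')⟩
  have hfl : IsRkFlat N k (F' ∪ {z}) := union_singleton ▸ ⟨hflat, hrk⟩
  exact ⟨hfl, hfl, P, F', hP, hF', by rw [hPz, union_comm], by rw [hfl.2, hP.2, hF'.2]; omega⟩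

/-- Claim 2 of the main proof: `F' ∪ {z}` is an ordinary rank-`k` flat. -/
theorem ordinary_flat_construction {α : Type*} (N : Matroid α) (k : ℕ) (P H F' : Set α)
    (x y z : α) (hP : IsRkFlat N 1 P) (hH : IsRkFlat N (k - 2) H)
    (hx : x ∈ N.E) (hy : y ∈ N.E)
    (h1 : IsRkFlat N (k + 1) (H ∪ P ∪ {x, y}))
    (h2 : IsRkFlat N k (H ∪ {x, y}))
    (h3 : IsRkFlat N 3 (P ∪ {x, y}))
    (hzP : z ∈ P) (hxz : IsRkFlat N 2 {x, z}) (hxzcl : N.closure {x, z} = {x, z})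
    (hF' : IsRkFlat N (k - 1) F') (hF'sub : F' ⊆ H ∪ {x, y})
    (hxF' : x ∈ F') (hyF' : y ∉ F') :
    IsRkFlat N k (F' ∪ {z}) ∧ OrdinaryFlat N k (F' ∪ {z}) :=
  ordinary_flat_construction_general N k P H F' x y z hP h1 h2 hzP hxz hxzcl hF' hF'sub

end SG
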